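/- If θ ∈ (2/3, 1/3) ⊂ ℝ/ℤ (the open arc through 0) has 2-angular rotation number p/q under the doubling map, then the set A_1 = {2^{2k+1}θ : 0 ≤ k ≤ q−1} of odd iterates is contained in the arc (1/3, 2/3). -/

import Mathlib

/-!
Lift `A₀` and `A₁` to real intervals `[α, β]` and `[γ, δ]` with `β < γ ≤ δ < α + 1`. Both sets
are invariant under `t ↦ 4t` and contain no fixed point of it, so each of the gaps `(β, γ)` and
`(δ, α + 1)` contains a fixed point `e / 3` (`e ∈ ℤ`): for the lift `x ↦ 4x - e` sending `β` back
into `[α, β]`, the function `3x - e` changes sign on `[β, γ]`. These two fixed points cut the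
circle into an arc containing `A₀` and one containing `A₁ = 2A₀`. As `θ ∈ (-1/3, 1/3)` and
`2θ ∈ A₁`, either the cut points are `1/3` and `2/3`, or `A₀` lies in `(-1/3, 0)` or `(0, 1/3)`
and then its double `A₁` lies in `(1/3, 2/3)`.
-/

/-- The open arc of the circle `ℝ/ℤ` which is the projection of the real interval `(a,b)`. -/
def Arc (a b : ℝ) : Set (AddCircle (1 : ℝ)) :=
  (fun x : ℝ => ((x : ℝ) : AddCircle (1 : ℝ))) '' Set.Ioo a b

/-- A labelling `L` of points of `ℝ/ℤ` listed in counterclockwise cyclic order. -/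
def IsCyclicList {q : ℕ} [NeZero q] (L : Fin q → AddCircle (1 : ℝ)) : Prop :=
  ∃ x : Fin q → ℝ, StrictMono x ∧ (∀ i, x i < x 0 + 1) ∧
    ∀ i, ((x i : ℝ) : AddCircle (1 : ℝ)) = L i

/-- A `q`-point set `s ⊆ ℝ/ℤ` has angular rotation number `p/q` under `t ↦ d·t`:
listed in cyclic order, the map shifts the points by `p` positions. -/
def SetRotNum (d p q : ℕ) [NeZero q] (s : Set (AddCircle (1 : ℝ))) : Prop :=
  ∃ L : Fin q → AddCircle (1 : ℝ), IsCyclicList L ∧ Set.range L = s ∧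
    ∀ i, (d : ℕ) • L i = L (i + (Fin.ofNat q p : Fin q))

/-- `θ` has 2-angular rotation number `p/q`: the sets `A₀ = {4^k θ : k < q}` and
`A₁ = {2·4^k θ : k < q}` lie in disjoint arcs of the circle, and each has angular
rotation number `p/q` under `t ↦ 4t`. -/
def TwoRotNum (p q : ℕ) [NeZero q] (θ : AddCircle (1 : ℝ)) : Prop :=
  (∃ a b c d : ℝ, b ≤ a + 1 ∧ d ≤ c + 1 ∧
      {t | ∃ k < q, t = (4 ^ k : ℕ) • θ} ⊆ Arc a b ∧
      {t | ∃ k < q, t = (2 * 4 ^ k : ℕ) • θ} ⊆ Arc c d ∧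
      Disjoint (Arc a b) (Arc c d)) ∧
  SetRotNum 4 p q {t | ∃ k < q, t = (4 ^ k : ℕ) • θ} ∧
  SetRotNum 4 p q {t | ∃ k < q, t = (2 * 4 ^ k : ℕ) • θ}

open Set

local notation "𝕋" => AddCircle (1 : ℝ)

/-- The lift `x ↦ d * x - e` has its fixed point `e / (d - 1)` in `[β, γ]`. -/
lemma exists_int_between_of_mul_congr {d α β γ δ y z : ℝ} (hd : 0 ≤ d)
    (hy : y ∈ Icc α β) (hz : z ∈ Icc γ δ) (hβγ : β ≤ γ) (hδα : δ < α + 1)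
    (hβ : ∃ m : ℤ, d * β = y + m) (hγ : ∃ n : ℤ, d * γ = z + n) :
    ∃ e : ℤ, (d - 1) * β ≤ e ∧ (e : ℝ) ≤ (d - 1) * γ := by
  obtain ⟨m, hm⟩ := hβ
  obtain ⟨n, hn⟩ := hγ
  have hmn : (m : ℝ) ≤ n := by
    have : (m : ℝ) < n + 1 := by nlinarith [hy.1, hz.2]
    exact_mod_cast Int.lt_add_one_iff.mp (by exact_mod_cast this)
  exact ⟨m, by linarith [hy.2], by linarith [hz.1]⟩

lemma mem_Ioo_third_of_double {e₁ e₃ : ℤ} {t u v w : ℝ} (ht : t ∈ Ioo (-(1 / 3)) (1 / 3))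
    (htI : 3 * t ∈ Ioo ((e₃ : ℝ) - 3) e₁) (huI : 3 * u ∈ Ioo ((e₃ : ℝ) - 3) e₁)
    (hvJ : 3 * v ∈ Ioo (e₁ : ℝ) e₃) (hwJ : 3 * w ∈ Ioo (e₁ : ℝ) e₃)
    (hw : ∃ n : ℤ, w = 2 * t + n) (hv : ∃ n : ℤ, v = 2 * u + n) :
    v ∈ Ioo (1 / 3) (2 / 3) := by
  obtain ⟨ht₁, ht₂⟩ := ht
  obtain ⟨htI₁, htI₂⟩ := htI
  obtain ⟨huI₁, huI₂⟩ := huI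
  obtain ⟨hvJ₁, hvJ₂⟩ := hvJ
  obtain ⟨hwJ₁, hwJ₂⟩ := hwJ
  have he₁ : -1 < e₁ := by exact_mod_cast (by push_cast; linarith : ((-1 : ℤ) : ℝ) < e₁)
  have he₃ : e₃ < 4 := by exact_mod_cast (by push_cast; linarith : (e₃ : ℝ) < (4 : ℤ))
  have he₁₃ : e₁ < e₃ := by exact_mod_cast (by linarith : (e₁ : ℝ) < e₃)
  have he₃₁ : e₃ < e₁ + 3 := by
    exact_mod_cast (by push_cast; linarith : (e₃ : ℝ) < ((e₁ + 3 : ℤ) : ℝ))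
  -- `(e₁, e₃) = (0, 1)` or `(2, 3)` would force `0 < w - 2t < 1`
  have hgood : e₁ = 1 ∨ e₃ = 2 := by
    obtain ⟨n, rfl⟩ := hw
    by_contra hbad
    have hn : (0 : ℝ) < n ∧ (n : ℝ) < 1 := by
      rcases (by omega : (e₁ = 0 ∧ e₃ = 1) ∨ (e₁ = 2 ∧ e₃ = 3)) with ⟨rfl, rfl⟩ | ⟨rfl, rfl⟩ <;>
        push_cast at * <;> constructor <;> linarith
    have : 0 < n ∧ n < 1 := by exact_mod_cast hn
    omega
  obtain ⟨n, rfl⟩ := hv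
  rcases (by omega : (e₁ = 1 ∧ e₃ = 2) ∨ (e₁ = 1 ∧ e₃ = 3) ∨ (e₁ = 0 ∧ e₃ = 2)) with
    ⟨rfl, rfl⟩ | ⟨rfl, rfl⟩ | ⟨rfl, rfl⟩ <;> push_cast at *
  · constructor <;> linarith
  · have : n = 0 := by
      have : -1 < 3 * n ∧ 3 * n < 3 := by
        exact_mod_cast (by constructor <;> linarith : (-1 : ℝ) < 3 * n ∧ 3 * (n : ℝ) < 3)
      omega
    subst this
    constructor <;> push_cast at * <;> linarith
  · have : n = 1 := by
      have : 0 < 3 * n ∧ 3 * n < 4 := by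
        exact_mod_cast (by constructor <;> linarith : (0 : ℝ) < 3 * n ∧ 3 * (n : ℝ) < 4)
      omega
    subst this
    constructor <;> push_cast at * <;> linarith

theorem subset_Ioo_third_of_lifts {U V : Set ℝ} {α β γ δ t : ℝ}
    (hα : IsLeast U α) (hβ : IsGreatest U β) (hγ : IsLeast V γ) (hδ : IsGreatest V δ)
    (hβγ : β < γ) (hδα : δ < α + 1)
    (hU : ∀ x ∈ U, ∃ y ∈ U, ∃ n : ℤ, 4 * x = y + n)
    (hV : ∀ x ∈ V, ∃ y ∈ V, ∃ n : ℤ, 4 * x = y + n)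
    (hfix : ∀ x ∈ U ∪ V, ∀ n : ℤ, 3 * x ≠ n)
    (ht : t ∈ Ioo (-(1 / 3)) (1 / 3)) (htU : t ∈ U) (htV : ∃ w ∈ V, ∃ n : ℤ, w = 2 * t + n)
    (hUV : ∀ v ∈ V, ∃ u ∈ U, ∃ n : ℤ, v = 2 * u + n) :
    V ⊆ Ioo (1 / 3) (2 / 3) := by
  have hUI : ∀ x ∈ U, x ∈ Icc α β := fun x hx => ⟨hα.2 hx, hβ.2 hx⟩
  have hVI : ∀ x ∈ V, x ∈ Icc γ δ := fun x hx => ⟨hγ.2 hx, hδ.2 hx⟩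
  obtain ⟨e₁, he₁β, he₁γ⟩ : ∃ e₁ : ℤ, 3 * β < e₁ ∧ (e₁ : ℝ) < 3 * γ := by
    obtain ⟨y, hy, hβy⟩ := hU β hβ.1
    obtain ⟨z, hz, hγz⟩ := hV γ hγ.1
    obtain ⟨e, hβe, heγ⟩ := exists_int_between_of_mul_congr (by norm_num) (hUI y hy) (hVI z hz)
      hβγ.le hδα hβy hγz
    norm_num at hβe heγ
    exact ⟨e, hβe.lt_of_ne (hfix β (.inl hβ.1) e),
      heγ.lt_of_ne fun h => hfix γ (.inr hγ.1) e h.symm⟩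
  obtain ⟨e₃, he₃δ, he₃α⟩ : ∃ e₃ : ℤ, 3 * δ < e₃ ∧ (e₃ : ℝ) < 3 * (α + 1) := by
    obtain ⟨y, hy, hδy⟩ := hV δ hδ.1
    obtain ⟨z, hz, m, hαz⟩ := hU α hα.1
    obtain ⟨e, hδe, heα⟩ := exists_int_between_of_mul_congr (α := γ) (β := δ) (γ := α + 1)
      (δ := β + 1) (z := z + 1) (by norm_num) (hVI y hy) (by simpa using hUI z hz) hδα.le
      (by linarith) hδy
      ⟨m + 3, by push_cast; linarith⟩
    norm_num at hδe heα
    refine ⟨e, hδe.lt_of_ne (hfix δ (.inr hδ.1) e), heα.lt_of_ne fun h => ?_⟩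
    exact hfix α (.inl hα.1) (e - 3) (by push_cast; linarith)
  intro v hv
  obtain ⟨u, hu, huv⟩ := hUV v hv
  obtain ⟨w, hw, htw⟩ := htV
  have hI : ∀ x ∈ U, 3 * x ∈ Ioo ((e₃ : ℝ) - 3) e₁ := fun x hx =>
    ⟨by linarith [(hUI x hx).1], by linarith [(hUI x hx).2]⟩
  have hJ : ∀ x ∈ V, 3 * x ∈ Ioo (e₁ : ℝ) e₃ := fun x hx =>
    ⟨by linarith [(hVI x hx).1], by linarith [(hVI x hx).2]⟩
  exact mem_Ioo_third_of_double ht (hI t htU) (hI u hu) (hJ v hv) (hJ w hw) htw huv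

lemma coe_eq_coe_iff_exists_int {x y : ℝ} : (x : 𝕋) = y ↔ ∃ n : ℤ, x = y + n := by
  rw [← sub_eq_zero, ← AddCircle.coe_sub, AddCircle.coe_eq_zero_iff]
  simp only [zsmul_eq_mul, mul_one]
  exact ⟨fun ⟨n, hn⟩ => ⟨n, by linarith⟩, fun ⟨n, hn⟩ => ⟨n, by linarith⟩⟩

lemma nsmul_coe (k : ℕ) (x : ℝ) : k • (x : 𝕋) = ((k * x : ℝ) : 𝕋) := by
  rw [← AddCircle.coe_nsmul, nsmul_eq_mul]

lemma arc_add_int (a b : ℝ) (n : ℤ) : Arc (a + n) (b + n) = Arc a b := by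
  have hcoe : ((↑) : ℝ → 𝕋) ∘ (· + (n : ℝ)) = (↑) := by
    funext x
    simp
  rw [Arc, ← image_add_const_Ioo, image_image]
  exact congrArg (· '' Ioo a b) hcoe

lemma coe_mem_arc_of_mem_Ioo_add {a b x : ℝ} (n : ℤ) (hx : x ∈ Ioo (a + n) (b + n)) :
    (x : 𝕋) ∈ Arc a b :=
  arc_add_int a b n ▸ ⟨x, hx, rfl⟩

lemma exists_int_mem_Ioo_add_of_coe_mem_arc {a b t : ℝ} (h : (t : 𝕋) ∈ Arc a b) :
    ∃ n : ℤ, t ∈ Ioo (a + n) (b + n) := by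
  obtain ⟨x, hx, hxt⟩ := h
  obtain ⟨n, rfl⟩ := coe_eq_coe_iff_exists_int.mp hxt.symm
  exact ⟨n, by constructor <;> linarith [hx.1, hx.2]⟩

lemma exists_int_le_of_disjoint_arc {a b c d : ℝ} (hdisj : Disjoint (Arc a b) (Arc c d))
    (hab : a < b) (hcd : c < d) : ∃ n : ℤ, b ≤ c + n ∧ d + n ≤ a + 1 := by
  have hac₁ := Int.le_ceil (a - c)
  have hac₂ := Int.ceil_lt_add_one (a - c)
  refine ⟨⌈a - c⌉, not_lt.mp fun hcb => ?_, not_lt.mp fun had => ?_⟩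
  · obtain ⟨x, hx₁, hx₂⟩ := exists_between (lt_min hcb (by linarith : c + ⌈a - c⌉ < d + ⌈a - c⌉))
    refine disjoint_left.mp hdisj (coe_mem_arc_of_mem_Ioo_add 0 ?_)
      (coe_mem_arc_of_mem_Ioo_add ⌈a - c⌉ ⟨hx₁, hx₂.trans_le (min_le_right _ _)⟩)
    push_cast
    constructor <;> linarith [hx₂.trans_le (min_le_left _ _)]
  · obtain ⟨x, hx₁, hx₂⟩ := exists_between (lt_min had (by linarith : a + 1 < b + 1))
    refine disjoint_left.mp hdisj (coe_mem_arc_of_mem_Ioo_add 1 ?_)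
      (coe_mem_arc_of_mem_Ioo_add ⌈a - c⌉ ⟨by linarith, hx₂.trans_le (min_le_left _ _)⟩)
    push_cast
    constructor <;> linarith [hx₂.trans_le (min_le_right _ _)]

lemma finite_lifts {s : Set 𝕋} (hs : s.Finite) {a b : ℝ} (hab : b ≤ a + 1) :
    {x ∈ Ioo a b | (x : 𝕋) ∈ s}.Finite := by
  refine Finite.of_finite_image (hs.subset (image_subset_iff.mpr fun x hx => hx.2)) ?_
  intro x hx y hy hxy
  exact (AddCircle.coe_eq_coe_iff_of_mem_Ico (a := a) ⟨hx.1.1.le, by linarith [hx.1.2]⟩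
    ⟨hy.1.1.le, by linarith [hy.1.2]⟩).mp hxy

theorem subset_arc_third_of_le {s₀ s₁ : Set 𝕋} {a b c d t : ℝ} (hs₀ : s₀.Finite)
    (hs₁ : s₁.Finite) (h₀ : s₀ ⊆ Arc a b) (h₁ : s₁ ⊆ Arc c d) (hbc : b ≤ c) (hda : d ≤ a + 1)
    (hinv₀ : ∀ x ∈ s₀, 4 • x ∈ s₀) (hinv₁ : ∀ x ∈ s₁, 4 • x ∈ s₁)
    (hfix : ∀ x ∈ s₀ ∪ s₁, 3 • x ≠ 0) (ht : t ∈ Ioo (-(1 / 3)) (1 / 3)) (htab : t ∈ Ioo a b)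
    (ht₀ : (t : 𝕋) ∈ s₀) (ht₁ : 2 • (t : 𝕋) ∈ s₁) (hdouble : ∀ y ∈ s₁, ∃ x ∈ s₀, y = 2 • x) :
    s₁ ⊆ Arc (1 / 3) (2 / 3) := by
  set U := {x ∈ Ioo a b | (x : 𝕋) ∈ s₀}
  set V := {x ∈ Ioo c d | (x : 𝕋) ∈ s₁}
  have lift₀ : ∀ x ∈ s₀, ∃ u ∈ U, (u : 𝕋) = x := fun x hx => by
    obtain ⟨u, hu, rfl⟩ := h₀ hx
    exact ⟨u, ⟨hu, hx⟩, rfl⟩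
  have lift₁ : ∀ x ∈ s₁, ∃ v ∈ V, (v : 𝕋) = x := fun x hx => by
    obtain ⟨v, hv, rfl⟩ := h₁ hx
    exact ⟨v, ⟨hv, hx⟩, rfl⟩
  have hU : ∀ x ∈ U, ∃ y ∈ U, ∃ n : ℤ, 4 * x = y + n := fun x hx => by
    obtain ⟨y, hy, hxy⟩ := lift₀ _ (hinv₀ _ hx.2)
    exact ⟨y, hy, coe_eq_coe_iff_exists_int.mp (by rw [hxy, nsmul_coe]; norm_num)⟩
  have hV : ∀ x ∈ V, ∃ y ∈ V, ∃ n : ℤ, 4 * x = y + n := fun x hx => by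
    obtain ⟨y, hy, hxy⟩ := lift₁ _ (hinv₁ _ hx.2)
    exact ⟨y, hy, coe_eq_coe_iff_exists_int.mp (by rw [hxy, nsmul_coe]; norm_num)⟩
  have hfix' : ∀ x ∈ U ∪ V, ∀ n : ℤ, 3 * x ≠ n := by
    rintro x hx n hxn
    refine hfix x (hx.imp And.right And.right) ?_
    rw [nsmul_coe, Nat.cast_ofNat, hxn]
    exact (coe_eq_coe_iff_exists_int (y := 0)).mpr ⟨n, by simp⟩
  have htV : ∃ w ∈ V, ∃ n : ℤ, w = 2 * t + n := by
    obtain ⟨w, hw, htw⟩ := lift₁ _ ht₁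
    exact ⟨w, hw, coe_eq_coe_iff_exists_int.mp (by rw [htw, nsmul_coe]; norm_num)⟩
  have hUV : ∀ v ∈ V, ∃ u ∈ U, ∃ n : ℤ, v = 2 * u + n := fun v hv => by
    obtain ⟨x, hx, hvx⟩ := hdouble _ hv.2
    obtain ⟨u, hu, rfl⟩ := lift₀ x hx
    exact ⟨u, hu, coe_eq_coe_iff_exists_int.mp (by rw [hvx, nsmul_coe]; norm_num)⟩
  obtain ⟨w, hw, htw⟩ := htV
  have hU₀ : U.Finite := finite_lifts hs₀ (by linarith [hw.1.1, hw.1.2])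
  have hV₀ : V.Finite := finite_lifts hs₁ (by linarith [htab.1, htab.2])
  obtain ⟨α, hα⟩ := hU₀.isCompact.exists_isLeast ⟨t, htab, ht₀⟩
  obtain ⟨β, hβ⟩ := hU₀.isCompact.exists_isGreatest ⟨t, htab, ht₀⟩
  obtain ⟨γ, hγ⟩ := hV₀.isCompact.exists_isLeast ⟨w, hw⟩
  obtain ⟨δ, hδ⟩ := hV₀.isCompact.exists_isGreatest ⟨w, hw⟩
  have hsub := subset_Ioo_third_of_lifts hα hβ hγ hδ
    (by linarith [hβ.1.1.2, hγ.1.1.1]) (by linarith [hδ.1.1.2, hα.1.1.1]) hU hV hfix' ht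
    ⟨htab, ht₀⟩ ⟨w, hw, htw⟩ hUV
  intro y hy
  obtain ⟨v, hv, rfl⟩ := lift₁ y hy
  exact ⟨v, hsub hv, rfl⟩

theorem subset_arc_third {s₀ s₁ : Set 𝕋} {a b c d t : ℝ} (hs₀ : s₀.Finite) (hs₁ : s₁.Finite)
    (h₀ : s₀ ⊆ Arc a b) (h₁ : s₁ ⊆ Arc c d) (hdisj : Disjoint (Arc a b) (Arc c d))
    (hinv₀ : ∀ x ∈ s₀, 4 • x ∈ s₀) (hinv₁ : ∀ x ∈ s₁, 4 • x ∈ s₁)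
    (hfix : ∀ x ∈ s₀ ∪ s₁, 3 • x ≠ 0) (ht : t ∈ Ioo (-(1 / 3)) (1 / 3))
    (ht₀ : (t : 𝕋) ∈ s₀) (ht₁ : 2 • (t : 𝕋) ∈ s₁) (hdouble : ∀ y ∈ s₁, ∃ x ∈ s₀, y = 2 • x) :
    s₁ ⊆ Arc (1 / 3) (2 / 3) := by
  obtain ⟨n, htab⟩ := exists_int_mem_Ioo_add_of_coe_mem_arc (h₀ ht₀)
  rw [← arc_add_int a b n] at h₀ hdisj
  obtain ⟨w, hw, -⟩ := h₁ ht₁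
  obtain ⟨m, hbc, hda⟩ := exists_int_le_of_disjoint_arc hdisj (htab.1.trans htab.2)
    (hw.1.trans hw.2)
  rw [← arc_add_int c d m] at h₁
  exact subset_arc_third_of_le hs₀ hs₁ h₀ h₁ hbc (by linarith) hinv₀ hinv₁ hfix ht htab ht₀ ht₁
    hdouble

lemma eq_zero_of_three_nsmul_coe_eq_zero {t : ℝ} (ht : t ∈ Ioo (-(1 / 3)) (1 / 3))
    (h : 3 • (t : 𝕋) = 0) : t = 0 := by
  rw [nsmul_coe, Nat.cast_ofNat] at h
  obtain ⟨n, hn⟩ := (coe_eq_coe_iff_exists_int (y := 0)).mp h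
  have : n = 0 := by
    have : -1 < n ∧ n < 1 := by
      exact_mod_cast (by push_cast; constructor <;> linarith [ht.1, ht.2] :
        ((-1 : ℤ) : ℝ) < n ∧ (n : ℝ) < (1 : ℤ))
    omega
  subst this
  push_cast at hn
  linarith

namespace SetRotNum

variable {d p q : ℕ} [NeZero q] {s : Set 𝕋}

lemma finite (h : SetRotNum d p q s) : s.Finite := by
  obtain ⟨L, -, rfl, -⟩ := h
  exact finite_range L

lemma nsmul_mem (h : SetRotNum d p q s) {x : 𝕋} (hx : x ∈ s) : d • x ∈ s := by
  obtain ⟨L, -, rfl, hL⟩ := h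
  obtain ⟨i, rfl⟩ := hx
  exact ⟨_, (hL i).symm⟩

lemma pow_card_nsmul (h : SetRotNum d p q s) {x : 𝕋} (hx : x ∈ s) : d ^ q • x = x := by
  obtain ⟨L, -, rfl, hL⟩ := h
  obtain ⟨i, rfl⟩ := hx
  have hpow : ∀ n i, d ^ n • L i = L (i + n • (Fin.ofNat q p : Fin q)) := by
    intro n
    induction n with
    | zero => simp
    | succ n ih =>
      intro i
      rw [pow_succ, mul_nsmul, ih, hL, succ_nsmul, add_assoc]
  have hq : q • (Fin.ofNat q p : Fin q) = 0 := by
    simpa using card_nsmul_eq_zero (G := Fin q) (x := Fin.ofNat q p)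
  rw [hpow, hq, add_zero]

end SetRotNum

/-- If `θ` lies in the open arc `(2/3, 1/3)` through `0` and has 2-angular rotation
number `p/q` under the doubling map, then the set `A₁ = {2·4^k θ : 0 ≤ k ≤ q−1}` of odd
iterates is contained in the arc `(1/3, 2/3)`. -/
theorem stmt7 (p q : ℕ) [NeZero q] (θ : AddCircle (1 : ℝ))
    (hθarc : θ ∈ Arc (-(1 / 3) : ℝ) (1 / 3)) (hθ : TwoRotNum p q θ) :
    {t | ∃ k < q, t = (2 * 4 ^ k : ℕ) • θ} ⊆ Arc (1 / 3 : ℝ) (2 / 3) := by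
  obtain ⟨⟨a, b, c, d, -, -, h₀, h₁, hdisj⟩, hrot₀, hrot₁⟩ := hθ
  obtain ⟨t, ht, rfl⟩ := hθarc
  set A₀ := {x | ∃ k < q, x = (4 ^ k : ℕ) • (t : 𝕋)}
  set A₁ := {x | ∃ k < q, x = (2 * 4 ^ k : ℕ) • (t : 𝕋)}
  have hq : 0 < q := Nat.pos_of_neZero q
  have ht₀ : (t : 𝕋) ∈ A₀ := ⟨0, hq, by simp⟩
  have ht₁ : 2 • (t : 𝕋) ∈ A₁ := ⟨0, hq, by simp⟩
  have hperiod : 4 ^ q • (t : 𝕋) = t := hrot₀.pow_card_nsmul ht₀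
  -- `θ` is a multiple of every point of `A₀ ∪ A₁`, so none of them is fixed by `×4` unless `θ` is
  have hreturn : ∀ x ∈ A₀ ∪ A₁, ∃ m : ℕ, m • x = t := by
    rintro x (⟨k, hk, rfl⟩ | ⟨k, hk, rfl⟩)
    · refine ⟨4 ^ (q - k), ?_⟩
      rw [smul_smul, ← pow_add, Nat.sub_add_cancel hk.le, hperiod]
    · refine ⟨2 * 4 ^ (q - k - 1), ?_⟩
      rw [smul_smul, ← hperiod]
      congr 1
      calc 2 * 4 ^ (q - k - 1) * (2 * 4 ^ k) = 4 ^ (q - k - 1 + 1 + k) := by ring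
        _ = 4 ^ q := by congr 1; omega
  have ht0 : t ≠ 0 := by
    rintro rfl
    exact disjoint_left.mp hdisj (h₀ ht₀) (h₁ (by simpa using ht₁))
  refine subset_arc_third hrot₀.finite hrot₁.finite h₀ h₁ hdisj (fun _ => hrot₀.nsmul_mem)
    (fun _ => hrot₁.nsmul_mem) (fun x hx h3 => ?_) ht ht₀ ht₁ ?_
  · obtain ⟨m, hm⟩ := hreturn x hx
    exact ht0 (eq_zero_of_three_nsmul_coe_eq_zero ht (by rw [← hm, smul_comm, h3, smul_zero]))
  · rintro y ⟨k, hk, rfl⟩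
    exact ⟨_, ⟨k, hk, rfl⟩, mul_nsmul' _ _ _⟩
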